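/- For m > 0 and φ(θ) = -m cos θ, b_φ(e) ~ π m √2 / √e as e → +∞, where b_φ(e) = 2√2 ∫₀^{2π} cos θ √((e + m cos θ)₊) dθ. -/

import Mathlib

/-!
Since `∫₀^{2π} cos θ dθ = 0`, one may subtract `√e` under the integral and rationalise:
`√e · (√(e + m cos θ) - √e) = m cos θ · √e / (√(e + m cos θ) + √e)`. Hence for `e ≥ |m|`,
`√e · ∫₀^{2π} cos θ √(e + m cos θ) dθ = ∫₀^{2π} m cos² θ · √e / (√(e + m cos θ) + √e) dθ`, whose
integrand is bounded by `|m|` and tends to `m cos² θ / 2`; dominated convergence gives the limit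
`m π / 2`.
-/

open Real Set Filter

/-- b_φ(e) = 2√2 ∫₀^{2π} cos θ √((e + m cos θ)₊) dθ for φ(θ) = -m cos θ. -/
noncomputable def bphi (m e : ℝ) : ℝ :=
  2 * Real.sqrt 2 * ∫ θ in (0:ℝ)..(2 * π), Real.cos θ * Real.sqrt (max (e + m * Real.cos θ) 0)

open MeasureTheory Topology

lemma sqrt_add_sub_sqrt {e x : ℝ} (he : 0 < e) (hx : 0 ≤ e + x) :
    √(e + x) - √e = x / (√(e + x) + √e) := by
  have hpos : 0 < √(e + x) + √e := by positivity
  rw [eq_div_iff hpos.ne']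
  linear_combination Real.sq_sqrt hx - Real.sq_sqrt he.le

lemma sqrt_div_sqrt_add_add_sqrt_le_one (e x : ℝ) : √e / (√(e + x) + √e) ≤ 1 :=
  div_le_one_of_le₀ (le_add_of_nonneg_left (Real.sqrt_nonneg _)) (by positivity)

lemma tendsto_sqrt_div_sqrt_add_add_sqrt (c : ℝ) :
    Tendsto (fun e => √e / (√(e + c) + √e)) atTop (𝓝 (1 / 2)) := by
  have hcont : ContinuousAt (fun x : ℝ => 1 / (√(1 + x) + 1)) 0 :=
    continuousAt_const.div (by fun_prop) (by positivity)
  have hinv : Tendsto (fun e => c / e) atTop (𝓝 0) := tendsto_const_nhds.div_atTop tendsto_id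
  have hlim := hcont.tendsto.comp hinv
  norm_num at hlim
  refine hlim.congr' ?_
  filter_upwards [eventually_gt_atTop 0, eventually_ge_atTop (-c)] with e he hec
  have : 1 + c / e = (e + c) / e := by field_simp
  rw [Function.comp_apply, this, Real.sqrt_div (by linarith) e]
  field_simp

lemma integral_cos_mul_sqrt_eq {m e : ℝ} (he : 0 < e) (hme : |m| ≤ e) :
    √e * ∫ θ in (0:ℝ)..(2 * π), cos θ * √(max (e + m * cos θ) 0)
      = ∫ θ in (0:ℝ)..(2 * π), m * cos θ ^ 2 * (√e / (√(e + m * cos θ) + √e)) := by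
  have hpos : ∀ θ, 0 ≤ e + m * cos θ := fun θ => by
    nlinarith [abs_le.1 (abs_cos_le_one θ), abs_le.1 hme, abs_mul_abs_self m, abs_nonneg m]
  have hzero : ∫ θ in (0:ℝ)..(2 * π), cos θ * √e = 0 := by
    simp [intervalIntegral.integral_mul_const, integral_cos]
  have hsub : ∫ θ in (0:ℝ)..(2 * π), cos θ * √(max (e + m * cos θ) 0)
      = ∫ θ in (0:ℝ)..(2 * π), (cos θ * √(e + m * cos θ) - cos θ * √e) := by
    rw [intervalIntegral.integral_sub (Continuous.intervalIntegrable (by fun_prop) _ _)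
      (Continuous.intervalIntegrable (by fun_prop) _ _), hzero, sub_zero]
    exact intervalIntegral.integral_congr fun θ _ => by simp only [max_eq_left (hpos θ)]
  rw [hsub, ← intervalIntegral.integral_const_mul]
  refine intervalIntegral.integral_congr fun θ _ => ?_
  rw [← mul_sub, sqrt_add_sub_sqrt he (hpos θ)]
  ring

lemma tendsto_integral_cos_sq_mul (m : ℝ) :
    Tendsto
      (fun e => ∫ θ in (0:ℝ)..(2 * π), m * cos θ ^ 2 * (√e / (√(e + m * cos θ) + √e)))
      atTop (𝓝 (m * π / 2)) := by
  have hval : ∫ θ in (0:ℝ)..(2 * π), m * cos θ ^ 2 * (1 / 2) = m * π / 2 := by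
    simp [intervalIntegral.integral_mul_const, integral_cos_sq]
    ring
  rw [← hval]
  refine intervalIntegral.tendsto_integral_filter_of_dominated_convergence (fun _ => |m|)
    (Eventually.of_forall fun e => by fun_prop) (Eventually.of_forall fun e => ?_) (by simp)
    (ae_of_all _ fun θ _ => (tendsto_sqrt_div_sqrt_add_add_sqrt _).const_mul _)
  refine ae_of_all _ fun θ _ => ?_
  have hratio := sqrt_div_sqrt_add_add_sqrt_le_one e (m * cos θ)
  have hcos := cos_sq_le_one θ
  calc ‖m * cos θ ^ 2 * (√e / (√(e + m * cos θ) + √e))‖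
      = |m| * cos θ ^ 2 * (√e / (√(e + m * cos θ) + √e)) := by
        rw [norm_mul, norm_mul, Real.norm_eq_abs, Real.norm_of_nonneg (sq_nonneg _),
          Real.norm_of_nonneg (by positivity)]
    _ ≤ |m| * 1 * 1 := by gcongr
    _ = |m| := by ring

/-- b_φ(e) ~ πm√2/√e as e → +∞. -/
theorem bphi_asymptotics (m : ℝ) (hm : 0 < m) :
    Tendsto (fun e : ℝ => bphi m e / (π * m * Real.sqrt 2 / Real.sqrt e))
      atTop (nhds 1) := by
  have hlim := (tendsto_integral_cos_sq_mul m).const_mul (2 / (π * m))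
  rw [show 2 / (π * m) * (m * π / 2) = 1 by field_simp] at hlim
  refine hlim.congr' ?_
  filter_upwards [eventually_ge_atTop |m|, eventually_gt_atTop 0] with e hme he
  rw [← integral_cos_mul_sqrt_eq he hme, bphi]
  field_simp
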